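/- arXiv:1205.2996 — 4 statements merged into one kernel-verified Lean document; each statement's English description precedes it below -/
import Mathlib

section
/- For any regular binary game, any probability measure P on Σ^∞, and any positive natural numbers m and n, the generalized entropies satisfy the chain rule H_{m+n} = H_m + H_{n|m}. -/
open MeasureTheory ENNReal Filter Topology

noncomputable section

/-- A regular binary game `(Σ, Γ, λ)` with `Σ = {0,1}` (encoded as `Bool`, bit `0 = false`),
prediction space `Γ = [0,1]` and loss function `λ : Σ × [0,1] → [0,∞]` that is continuous,
convex in the prediction, and admits a prediction of finite loss on both outcomes. -/
structure RegularGame where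
  loss : Bool → ℝ → ℝ≥0∞
  continuousOn : ∀ b, ContinuousOn (loss b) (Set.Icc 0 1)
  convex : ∀ b : Bool, ∀ γ₁ ∈ Set.Icc (0:ℝ) 1, ∀ γ₂ ∈ Set.Icc (0:ℝ) 1,
      ∀ t ∈ Set.Icc (0:ℝ) 1,
      loss b (t * γ₁ + (1 - t) * γ₂)
        ≤ ENNReal.ofReal t * loss b γ₁ + ENNReal.ofReal (1 - t) * loss b γ₂
  finite_pred : ∃ γ ∈ Set.Icc (0:ℝ) 1, loss false γ < ⊤ ∧ loss true γ < ⊤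

/-- A prediction strategy: for each history length `i`, a map from `i`-bit histories
to predictions in `[0,1]`. -/
def Strategy : Type := (i : ℕ) → (Fin i → Bool) → Set.Icc (0:ℝ) 1

/-- Cumulative loss of a strategy on the finite string `w`. -/
def strategyLoss (G : RegularGame) {n : ℕ} (w : Fin n → Bool) (S : Strategy) : ℝ≥0∞ :=
  ∑ i : Fin n, G.loss (w i)
    ((S i.val (fun j : Fin i.val => w ⟨j.val, j.isLt.trans i.isLt⟩) : Set.Icc (0:ℝ) 1) : ℝ)

/-- Cylinder set of the finite string `w` in `Σ^∞`. -/
def cyl {n : ℕ} (w : Fin n → Bool) : Set (ℕ → Bool) := {ω | ∀ i : Fin n, ω i.val = w i}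

/-- The `n`-step generalized entropy `H_n = inf_℘ Σ_{w ∈ Σ^n} P(w)·Loss(w,℘)`. -/
def Hn (G : RegularGame) (P : Measure (ℕ → Bool)) (n : ℕ) : ℝ≥0∞ :=
  ⨅ S : Strategy, ∑ w : Fin n → Bool, P (cyl w) * strategyLoss G w S

/-- The generalized conditional entropy
`H_{n|m} = inf_℘ Σ_{w∈Σ^m, x∈Σ^n} P(w·x) · Σ_{i<n} λ(x_i, ℘^{m+i}(w·x_0⋯x_{i−1}))`. -/
def Hcond (G : RegularGame) (P : Measure (ℕ → Bool)) (n m : ℕ) : ℝ≥0∞ :=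
  ⨅ S : Strategy, ∑ w : Fin m → Bool, ∑ x : Fin n → Bool,
    P (cyl (Fin.append w x)) *
      ∑ i : Fin n, G.loss (x i)
        ((S (m + i.val)
          (Fin.append w (fun j : Fin i.val => x ⟨j.val, j.isLt.trans i.isLt⟩)) : Set.Icc (0:ℝ) 1) : ℝ)

/-- The left shift on one-sided sequences. -/
def shiftN : (ℕ → Bool) → (ℕ → Bool) := fun ω n => ω (n + 1)

/-!
Write a string of length `m + n` as `u ++ x`. The loss of a strategy on `u ++ x` is its loss on
`u` plus its loss on `x` played after `u`, and the cylinders of the continuations `u ++ x`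
partition the cylinder of `u`; hence the `(m + n)`-step expected loss is the `m`-step expected
loss plus the conditional one. These two terms only involve the strategy on histories of length
`< m` and `≥ m` respectively, so splicing two strategies minimizes them independently and the
infimum of the sum is the sum of the infima.
-/

open Function

variable {m n : ℕ}

lemma measurableSet_cyl (w : Fin n → Bool) : MeasurableSet (cyl w) := by
  simp only [cyl, Set.ofPred_forall]
  exact .iInter fun i => measurableSet_eq_fun (measurable_pi_apply _) measurable_const

lemma cyl_eq_iUnion_cyl_append (u : Fin m → Bool) :
    cyl u = ⋃ x : Fin n → Bool, cyl (Fin.append u x) := by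
  ext ω
  simp only [cyl, Set.mem_ofPred_eq, Set.mem_iUnion]
  constructor
  · intro hω
    exact ⟨fun i => ω (m + i), Fin.addCases (by simpa using hω) (by simp)⟩
  · rintro ⟨x, hx⟩ i
    simpa using hx (Fin.castAdd n i)

lemma pairwise_disjoint_cyl_append (u : Fin m → Bool) :
    Pairwise (Disjoint on fun x : Fin n → Bool => cyl (Fin.append u x)) := by
  intro x y hxy
  refine Set.disjoint_left.2 fun ω hx hy => hxy (funext fun i => ?_)
  simpa using (hx (Fin.natAdd m i)).symm.trans (hy (Fin.natAdd m i))

lemma sum_measure_cyl_append (P : Measure (ℕ → Bool)) (u : Fin m → Bool) :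
    ∑ x : Fin n → Bool, P (cyl (Fin.append u x)) = P (cyl u) := by
  rw [cyl_eq_iUnion_cyl_append (n := n) u, measure_iUnion (pairwise_disjoint_cyl_append u)
    fun x => measurableSet_cyl _, tsum_fintype]

lemma strategyLoss_eq_sum_take (G : RegularGame) (w : Fin n → Bool) (S : Strategy) :
    strategyLoss G w S = ∑ i : Fin n, G.loss (w i) (S i (Fin.take i i.isLt.le w)) :=
  rfl

/-- The summand of `Hcond`: the loss of `S` on `x` when it is played after the history `u`. -/
def condLoss (G : RegularGame) (u : Fin m → Bool) (x : Fin n → Bool) (S : Strategy) : ℝ≥0∞ :=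
  ∑ i : Fin n, G.loss (x i) (S (m + i) (Fin.append u (Fin.take i i.isLt.le x)))

lemma strategyLoss_append (G : RegularGame) (u : Fin m → Bool) (x : Fin n → Bool)
    (S : Strategy) :
    strategyLoss G (Fin.append u x) S = strategyLoss G u S + condLoss G u x S := by
  rw [strategyLoss_eq_sum_take, Fin.sum_univ_add, strategyLoss_eq_sum_take]
  congr 1 <;> refine Finset.sum_congr rfl fun i _ => ?_
  · rw [Fin.append_left, ← Fin.take_append_left i i.isLt.le u x]
    rfl
  · rw [Fin.append_right, ← Fin.take_append_right i i.isLt.le u x]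
    rfl

def Strategy.splice (m : ℕ) (S₁ S₂ : Strategy) : Strategy :=
  fun i => if i < m then S₁ i else S₂ i

lemma strategyLoss_splice (G : RegularGame) (u : Fin m → Bool) (S₁ S₂ : Strategy) :
    strategyLoss G u (S₁.splice m S₂) = strategyLoss G u S₁ :=
  Finset.sum_congr rfl fun i _ => by simp only [Strategy.splice, i.isLt, if_true]

lemma condLoss_splice (G : RegularGame) (u : Fin m → Bool) (x : Fin n → Bool)
    (S₁ S₂ : Strategy) : condLoss G u x (S₁.splice m S₂) = condLoss G u x S₂ :=
  Finset.sum_congr rfl fun i _ => by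
    simp only [Strategy.splice, Nat.not_lt.2 (m.le_add_right i), if_false]

def expectedLoss (G : RegularGame) (P : Measure (ℕ → Bool)) (n : ℕ) (S : Strategy) : ℝ≥0∞ :=
  ∑ w : Fin n → Bool, P (cyl w) * strategyLoss G w S

def expectedCondLoss (G : RegularGame) (P : Measure (ℕ → Bool)) (n m : ℕ) (S : Strategy) :
    ℝ≥0∞ :=
  ∑ u : Fin m → Bool, ∑ x : Fin n → Bool, P (cyl (Fin.append u x)) * condLoss G u x S

lemma expectedLoss_splice (G : RegularGame) (P : Measure (ℕ → Bool)) (S₁ S₂ : Strategy) :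
    expectedLoss G P m (S₁.splice m S₂) = expectedLoss G P m S₁ := by
  simp only [expectedLoss, strategyLoss_splice]

lemma expectedCondLoss_splice (G : RegularGame) (P : Measure (ℕ → Bool)) (S₁ S₂ : Strategy) :
    expectedCondLoss G P n m (S₁.splice m S₂) = expectedCondLoss G P n m S₂ := by
  simp only [expectedCondLoss, condLoss_splice]

lemma expectedLoss_add (G : RegularGame) (P : Measure (ℕ → Bool)) (S : Strategy) :
    expectedLoss G P (m + n) S = expectedLoss G P m S + expectedCondLoss G P n m S := by
  rw [expectedLoss, ← (Fin.appendEquiv m n).sum_comp, Fintype.sum_prod_type]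
  simp only [Fin.appendEquiv, Equiv.coe_fn_mk, strategyLoss_append, mul_add,
    Finset.sum_add_distrib, ← Finset.sum_mul, sum_measure_cyl_append]
  rfl

theorem chain_rule_generalized_entropy_general
    (G : RegularGame) (P : Measure (ℕ → Bool))
    (m n : ℕ) :
    Hn G P (m + n) = Hn G P m + Hcond G P n m := by
  calc Hn G P (m + n) = ⨅ S, expectedLoss G P m S + expectedCondLoss G P n m S :=
        iInf_congr (expectedLoss_add G P)
    _ = Hn G P m + Hcond G P n m :=
        (ENNReal.iInf_add_iInf fun S₁ S₂ => ⟨S₁.splice m S₂, by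
          rw [expectedLoss_splice, expectedCondLoss_splice]⟩).symm

/-- **Chain rule for generalized entropy.** For any regular binary game, any probability
measure `P` on `Σ^∞`, and any positive natural numbers `m` and `n`,
`H_{m+n} = H_m + H_{n|m}`. -/
theorem chain_rule_generalized_entropy
    (G : RegularGame) (P : Measure (ℕ → Bool)) [IsProbabilityMeasure P]
    (m n : ℕ) (hm : 1 ≤ m) (hn : 1 ≤ n) :
    Hn G P (m + n) = Hn G P m + Hcond G P n m :=
  chain_rule_generalized_entropy_general G P m n
end
end

section
/- Let (Ω, F, P) be a probability space, T : Ω → Ω a measure-preserving ergodic transformation, and let g_k, g : Ω → [0,∞) (k ∈ ℕ) be integrable functions such that g_k → g P-almost everywhere and the sequence of functions G_N(ω) := sup_{k ≥ N} |g_k(ω) − g(ω)| (N = 1, 2, …) is uniformly integrable. Then for P-almost every ω, (1/n) Σ_{k=0}^{n−1} g_k(T^k ω) → ∫ g dP as n → ∞. -/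
open MeasureTheory ENNReal Filter Topology

noncomputable section

/-- A sequence of `[0,∞]`-valued functions `F_N` is uniformly integrable if
`lim_{α→∞} sup_N ∫ F_N · 1_{[F_N > α]} dP = 0`. -/
def UnifIntENN {Ω : Type*} [MeasurableSpace Ω] (P : Measure Ω) (F : ℕ → Ω → ℝ≥0∞) : Prop :=
  Tendsto (fun α : ℝ => ⨆ N : ℕ, ∫⁻ ω in {ω | ENNReal.ofReal α < F N ω}, F N ω ∂P)
    atTop (𝓝 0)

/-- The tail supremum `G_N(ω) = sup_{k ≥ N} |g_k(ω) − g(ω)|` (valued in `[0,∞]`). -/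
def tailSup {Ω : Type*} (g : ℕ → Ω → ℝ) (g0 : Ω → ℝ) (N : ℕ) (ω : Ω) : ℝ≥0∞ :=
  ⨆ k : ℕ, ⨆ _ : N ≤ k, ENNReal.ofReal |g k ω - g0 ω|

/-!
Split `g_k = g + (g_k - g)`. Birkhoff's theorem handles `g`. For the error, `|g_k - g| ≤ G_N`
once `k ≥ N`, so up to finitely many terms the averaged error along an orbit is bounded by the
Birkhoff averages of `G_N`, which converge to `∫ G_N`; and `∫ G_N → 0` because `G_N → 0` a.e. and
the family is uniformly integrable.

Birkhoff's theorem itself comes from the maximal ergodic theorem: when `∫ f < 0`, the set where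
the Birkhoff sums of `f` are unbounded above is invariant and contained in the set where some
Birkhoff sum is positive, so by ergodicity and the maximal inequality it is null.
-/

open MeasureTheory ENNReal Filter Topology Set

section MaximalErgodic

variable {α : Type*} {T : α → α} {f : α → ℝ}

/-- `birkhoffMax T f n x = max_{k ≤ n} birkhoffSum T f k x`, computed through
`max_{k ≤ n+1} S_k(x) = max 0 (f x + max_{k ≤ n} S_k(T x))`. -/
def birkhoffMax (T : α → α) (f : α → ℝ) : ℕ → α → ℝ
  | 0 => 0
  | n + 1 => fun x => max 0 (f x + birkhoffMax T f n (T x))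

lemma birkhoffMax_nonneg (n : ℕ) (x : α) : 0 ≤ birkhoffMax T f n x := by
  cases n with
  | zero => exact le_rfl
  | succ n => exact le_max_left _ _

lemma birkhoffMax_le_succ (n : ℕ) (x : α) : birkhoffMax T f n x ≤ birkhoffMax T f (n + 1) x := by
  induction n generalizing x with
  | zero => exact birkhoffMax_nonneg 1 x
  | succ n ih => exact max_le_max le_rfl (add_le_add le_rfl (ih (T x)))

lemma monotone_birkhoffMax (x : α) : Monotone fun n => birkhoffMax T f n x :=
  monotone_nat_of_le_succ fun n => birkhoffMax_le_succ n x

lemma birkhoffSum_le_birkhoffMax (n : ℕ) (x : α) : birkhoffSum T f n x ≤ birkhoffMax T f n x := by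
  induction n generalizing x with
  | zero => simp [birkhoffMax]
  | succ n ih =>
    rw [birkhoffSum_succ']
    exact le_max_of_le_right (add_le_add le_rfl (ih (T x)))

lemma exists_birkhoffSum_eq_birkhoffMax (n : ℕ) (x : α) :
    ∃ k, birkhoffSum T f k x = birkhoffMax T f n x := by
  induction n generalizing x with
  | zero => exact ⟨0, rfl⟩
  | succ n ih =>
    obtain ⟨k, hk⟩ := ih (T x)
    rcases max_choice 0 (f x + birkhoffMax T f n (T x)) with h | h
    · exact ⟨0, by simp [birkhoffMax, h]⟩
    · exact ⟨k + 1, by simp [birkhoffMax, h, birkhoffSum_succ', hk]⟩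

lemma birkhoffMax_le_max_add_comp (n : ℕ) (x : α) :
    birkhoffMax T f n x ≤ max 0 (f x + birkhoffMax T f n (T x)) :=
  birkhoffMax_le_succ n x

variable [MeasurableSpace α] {μ : Measure α}

lemma measurable_birkhoffMax (hT : Measurable T) (hf : Measurable f) (n : ℕ) :
    Measurable (birkhoffMax T f n) := by
  induction n with
  | zero => exact measurable_const
  | succ n ih => exact measurable_const.max (hf.add (ih.comp hT))

lemma integrable_birkhoffMax (hT : MeasurePreserving T μ μ) (hf : Integrable f μ) (n : ℕ) :
    Integrable (birkhoffMax T f n) μ := by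
  induction n with
  | zero => exact integrable_zero _ _ _
  | succ n ih => exact (integrable_zero _ _ _).sup (hf.add (hT.integrable_comp_of_integrable ih))

lemma setIntegral_nonneg_birkhoffMax_pos (hT : MeasurePreserving T μ μ) (hf : Measurable f)
    (hfi : Integrable f μ) (n : ℕ) :
    0 ≤ ∫ x in {x | 0 < birkhoffMax T f n x}, f x ∂μ := by
  set M := birkhoffMax T f n
  set A := {x | 0 < M x}
  have hA : MeasurableSet A :=
    measurableSet_lt measurable_const (measurable_birkhoffMax hT.measurable hf n)
  have hM : Integrable M μ := integrable_birkhoffMax hT hfi n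
  have hMT : Integrable (M ∘ T) μ := hT.integrable_comp_of_integrable hM
  calc (0 : ℝ) = ∫ x, M x ∂μ - ∫ x, M (T x) ∂μ := by
        rw [← integral_map hT.measurable.aemeasurable (by rw [hT.map_eq]; exact hM.1), hT.map_eq,
          sub_self]
    _ ≤ ∫ x in A, M x ∂μ - ∫ x in A, M (T x) ∂μ := by
        have hMA : ∫ x in A, M x ∂μ = ∫ x, M x ∂μ :=
          setIntegral_eq_integral_of_forall_compl_eq_zero fun x hx =>
            (not_lt.1 hx).antisymm (birkhoffMax_nonneg n x)
        rw [hMA]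
        exact sub_le_sub_left (setIntegral_le_integral hMT
          (Eventually.of_forall fun x => birkhoffMax_nonneg n (T x))) _
    _ = ∫ x in A, (M x - M (T x)) ∂μ := (integral_sub hM.integrableOn hMT.integrableOn).symm
    _ ≤ ∫ x in A, f x ∂μ := setIntegral_mono_on (hM.sub hMT).integrableOn hfi.integrableOn hA
        fun x hx => by
          have := (le_max_iff.1 (birkhoffMax_le_max_add_comp n x)).resolve_left (not_le.2 hx)
          linarith

theorem setIntegral_nonneg_of_exists_birkhoffSum_pos (hT : MeasurePreserving T μ μ)
    (hf : Measurable f) (hfi : Integrable f μ) :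
    0 ≤ ∫ x in {x | ∃ n, 0 < birkhoffSum T f n x}, f x ∂μ := by
  have hunion : (⋃ n, {x | 0 < birkhoffMax T f n x}) = {x | ∃ n, 0 < birkhoffSum T f n x} := by
    ext x
    simp only [mem_iUnion, mem_ofPred_eq]
    constructor
    · rintro ⟨n, hn⟩
      obtain ⟨k, hk⟩ := exists_birkhoffSum_eq_birkhoffMax (T := T) (f := f) n x
      exact ⟨k, hk ▸ hn⟩
    · rintro ⟨n, hn⟩
      exact ⟨n, hn.trans_le (birkhoffSum_le_birkhoffMax n x)⟩
  have hlim := tendsto_setIntegral_of_monotone (s := fun n => {x | 0 < birkhoffMax T f n x})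
    (fun n => measurableSet_lt measurable_const (measurable_birkhoffMax hT.measurable hf n))
    (fun m n hmn x hx => hx.trans_le (monotone_birkhoffMax x hmn)) hfi.integrableOn
  rw [hunion] at hlim
  exact ge_of_tendsto' hlim (setIntegral_nonneg_birkhoffMax_pos hT hf hfi)

end MaximalErgodic

section Birkhoff

variable {α : Type*} {T : α → α} {f : α → ℝ}

lemma bddAbove_range_birkhoffSum_comp_iff (x : α) :
    BddAbove (range fun n => birkhoffSum T f n (T x)) ↔
      BddAbove (range fun n => birkhoffSum T f n x) := by
  constructor
  · rintro ⟨M, hM⟩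
    refine ⟨max 0 (f x + M), ?_⟩
    rintro _ ⟨_ | n, rfl⟩
    · simp
    · show birkhoffSum T f (n + 1) x ≤ _
      rw [birkhoffSum_succ']
      exact le_max_of_le_right (add_le_add le_rfl (hM ⟨n, rfl⟩))
  · rintro ⟨M, hM⟩
    refine ⟨M - f x, ?_⟩
    rintro _ ⟨n, rfl⟩
    have : birkhoffSum T f (n + 1) x ≤ M := hM ⟨n + 1, rfl⟩
    rw [birkhoffSum_succ'] at this
    show birkhoffSum T f n (T x) ≤ M - f x
    linarith

lemma eventually_div_lt_of_bddAbove_sub_mul {s : ℕ → ℝ} {q a : ℝ}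
    (hs : BddAbove (range fun n : ℕ => s n - n * q)) (hqa : q < a) :
    ∀ᶠ n : ℕ in atTop, s n / n < a := by
  obtain ⟨M, hM⟩ := hs
  have hlim : Tendsto (fun n : ℕ => q + M / n) atTop (𝓝 (q + 0)) :=
    tendsto_const_nhds.add (tendsto_const_div_atTop_nhds_zero_nat M)
  filter_upwards [hlim.eventually_lt_const (by simpa using hqa), eventually_gt_atTop 0]
    with n hlt hn
  have hn' : (0 : ℝ) < n := Nat.cast_pos.2 hn
  have : s n - n * q ≤ M := hM ⟨n, rfl⟩
  calc s n / n ≤ q + M / n := by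
        rw [div_le_iff₀ hn', add_mul, div_mul_cancel₀ _ hn'.ne']
        linarith
    _ < a := hlt

variable [MeasurableSpace α] {μ : Measure α}

lemma measurable_birkhoffSum (hT : Measurable T) (hf : Measurable f) (n : ℕ) :
    Measurable (birkhoffSum T f n) :=
  Finset.measurable_sum _ fun k _ => hf.comp (hT.iterate k)

lemma ae_bddAbove_range_birkhoffSum (hT : Ergodic T μ) (hf : Measurable f) (hfi : Integrable f μ)
    (hneg : ∫ x, f x ∂μ < 0) :
    ∀ᵐ x ∂μ, BddAbove (range fun n => birkhoffSum T f n x) := by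
  set B := {x | BddAbove (range fun n => birkhoffSum T f n x)}
  have hB : MeasurableSet B :=
    measurableSet_bddAbove_range (measurable_birkhoffSum hT.measurable hf)
  have hTB : T ⁻¹' B = B := Set.ext bddAbove_range_birkhoffSum_comp_iff
  refine (hT.ae_mem_or_ae_notMem hB hTB).resolve_right fun hunbdd => hneg.not_ge ?_
  have hpos : ∀ᵐ x ∂μ, x ∈ {x | ∃ n, 0 < birkhoffSum T f n x} := hunbdd.mono fun x hx => by
    obtain ⟨_, ⟨n, rfl⟩, hn⟩ := not_bddAbove_iff.1 hx 0
    exact ⟨n, hn⟩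
  rw [← setIntegral_eq_integral_of_ae_compl_eq_zero (hpos.mono fun x hx hxA => (hxA hx).elim)]
  exact setIntegral_nonneg_of_exists_birkhoffSum_pos hT.toMeasurePreserving hf hfi

variable [IsProbabilityMeasure μ]

lemma ae_eventually_birkhoffSum_div_lt (hT : Ergodic T μ) (hf : Measurable f)
    (hfi : Integrable f μ) :
    ∀ᵐ x ∂μ, ∀ a, ∫ x, f x ∂μ < a → ∀ᶠ n : ℕ in atTop, birkhoffSum T f n x / n < a := by
  have hq : ∀ q : ℚ, ∀ᵐ x ∂μ, ∫ x, f x ∂μ < q →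
      BddAbove (range fun n : ℕ => birkhoffSum T f n x - n * q) := by
    intro q
    by_cases hfq : ∫ x, f x ∂μ < q
    · have hsub : ∀ n x,
          birkhoffSum T (f - fun _ => (q : ℝ)) n x = birkhoffSum T f n x - n * q := fun n x => by
        rw [birkhoffSum_sub, birkhoffSum_of_comp_eq (φ := fun _ => (q : ℝ)) rfl]
        simp
      have := ae_bddAbove_range_birkhoffSum hT (hf.sub measurable_const)
        (hfi.sub (integrable_const _)) (by simpa [integral_sub hfi (integrable_const _)] using hfq)
      exact this.mono fun x hx _ => by simpa only [hsub] using hx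
    · exact Eventually.of_forall fun x h => absurd h hfq
  filter_upwards [ae_all_iff.2 hq] with x hx a ha
  obtain ⟨q, hfq, hqa⟩ := exists_rat_btwn ha
  exact eventually_div_lt_of_bddAbove_sub_mul (hx q hfq) hqa

theorem ae_tendsto_birkhoffSum_div (hT : Ergodic T μ) (hf : Measurable f) (hfi : Integrable f μ) :
    ∀ᵐ x ∂μ, Tendsto (fun n : ℕ => birkhoffSum T f n x / n) atTop (𝓝 (∫ x, f x ∂μ)) := by
  filter_upwards [ae_eventually_birkhoffSum_div_lt hT hf hfi,
    ae_eventually_birkhoffSum_div_lt hT hf.neg hfi.neg] with x hupper hlower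
  refine tendsto_order.2 ⟨fun a ha => ?_, hupper⟩
  filter_upwards [hlower (-a) (by simpa [integral_neg] using ha)] with n hn
  simpa [birkhoffSum_neg, neg_div] using hn

end Birkhoff

section UniformIntegrability

variable {Ω : Type*} [MeasurableSpace Ω] {P : Measure Ω}

lemma lintegral_le_iSup_setLIntegral_add_lintegral_min {F : ℕ → Ω → ℝ≥0∞}
    (hF : ∀ N, Measurable (F N)) (c : ℝ≥0∞) (N : ℕ) :
    ∫⁻ ω, F N ω ∂P ≤
      (⨆ M, ∫⁻ ω in {ω | c < F M ω}, F M ω ∂P) + ∫⁻ ω, min (F N ω) c ∂P := by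
  have hs : MeasurableSet {ω | c < F N ω} := measurableSet_lt measurable_const (hF N)
  rw [← lintegral_add_compl _ hs]
  refine add_le_add (le_iSup (fun M => ∫⁻ ω in {ω | c < F M ω}, F M ω ∂P) N) ?_
  calc ∫⁻ ω in {ω | c < F N ω}ᶜ, F N ω ∂P = ∫⁻ ω in {ω | c < F N ω}ᶜ, min (F N ω) c ∂P :=
        setLIntegral_congr_fun hs.compl fun ω (hω : ¬c < F N ω) => (min_eq_left (not_lt.1 hω)).symm
    _ ≤ ∫⁻ ω, min (F N ω) c ∂P := setLIntegral_le_lintegral _ _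

variable [IsFiniteMeasure P] {F : ℕ → Ω → ℝ≥0∞}

lemma UnifIntENN.lintegral_ne_top (hUI : UnifIntENN P F) (hF : ∀ N, Measurable (F N)) (N : ℕ) :
    ∫⁻ ω, F N ω ∂P ≠ ⊤ := by
  obtain ⟨α, hα⟩ := (hUI.eventually_le_const zero_lt_one).exists
  refine ne_top_of_le_ne_top ?_ ((lintegral_le_iSup_setLIntegral_add_lintegral_min hF _ N).trans
    (add_le_add hα (lintegral_mono fun ω => min_le_right _ (ENNReal.ofReal α))))
  exact ENNReal.add_ne_top.2 ⟨one_ne_top, (lintegral_const_lt_top ofReal_ne_top).ne⟩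

lemma UnifIntENN.tendsto_lintegral_zero (hUI : UnifIntENN P F) (hF : ∀ N, Measurable (F N))
    (hlim : ∀ᵐ ω ∂P, Tendsto (fun N => F N ω) atTop (𝓝 0)) :
    Tendsto (fun N => ∫⁻ ω, F N ω ∂P) atTop (𝓝 0) := by
  refine tendsto_order.2 ⟨fun a ha => absurd ha ENNReal.not_lt_zero, fun ε hε => ?_⟩
  obtain ⟨α, hα⟩ := (hUI.eventually_lt_const hε).exists
  have hmin : Tendsto (fun N => ∫⁻ ω, min (F N ω) (ENNReal.ofReal α) ∂P) atTop (𝓝 0) := by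
    simpa using tendsto_lintegral_of_dominated_convergence (f := fun _ => 0)
      (fun _ => ENNReal.ofReal α) (fun N => (hF N).min measurable_const)
      (fun N => ae_of_all _ fun ω => min_le_right _ _) (lintegral_const_lt_top ofReal_ne_top).ne
      (hlim.mono fun ω hω => by simpa using hω.min tendsto_const_nhds)
  filter_upwards [(tendsto_const_nhds.add hmin).eventually_lt_const (by simpa using hα)] with N hN
  exact (lintegral_le_iSup_setLIntegral_add_lintegral_min hF _ N).trans_lt hN

end UniformIntegrability

section TailSup

variable {Ω : Type*} {g : ℕ → Ω → ℝ} {g0 : Ω → ℝ}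

lemma measurable_tailSup [MeasurableSpace Ω] (hg : ∀ k, Measurable (g k)) (hg0 : Measurable g0)
    (N : ℕ) : Measurable (tailSup g g0 N) :=
  Measurable.iSup fun k => Measurable.iSup fun _ => ((hg k).sub hg0).abs.ennreal_ofReal

lemma abs_sub_le_toReal_tailSup {N k : ℕ} {ω : Ω} (hk : N ≤ k) (htop : tailSup g g0 N ω ≠ ⊤) :
    |g k ω - g0 ω| ≤ (tailSup g g0 N ω).toReal :=
  (ENNReal.ofReal_le_iff_le_toReal htop).1 <|
    le_iSup₂ (f := fun j (_ : N ≤ j) => ENNReal.ofReal |g j ω - g0 ω|) k hk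

lemma tendsto_tailSup_zero {ω : Ω} (h : Tendsto (fun k => g k ω) atTop (𝓝 (g0 ω))) :
    Tendsto (fun N => tailSup g g0 N ω) atTop (𝓝 0) := by
  have hanti : Antitone fun N => tailSup g g0 N ω :=
    fun M N hMN => iSup_mono fun k => iSup_mono' fun hk => ⟨hMN.trans hk, le_rfl⟩
  have habs : Tendsto (fun k => ENNReal.ofReal |g k ω - g0 ω|) atTop (𝓝 0) := by
    simpa using ENNReal.tendsto_ofReal ((tendsto_iff_norm_sub_tendsto_zero.1 h))
  convert tendsto_atTop_iInf hanti
  rw [← habs.limsup_eq, limsup_eq_iInf_iSup_of_nat]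
  rfl

end TailSup

lemma tendsto_sum_div_zero_of_abs_le {a : ℕ → ℝ} {b : ℕ → ℕ → ℝ} {c : ℕ → ℝ}
    (hab : ∀ N k, N ≤ k → |a k| ≤ b N k)
    (hb : ∀ N, Tendsto (fun n : ℕ => (∑ k ∈ Finset.range n, b N k) / n) atTop (𝓝 (c N)))
    (hc : Tendsto c atTop (𝓝 0)) :
    Tendsto (fun n : ℕ => (∑ k ∈ Finset.range n, a k) / n) atTop (𝓝 0) := by
  refine Metric.tendsto_nhds.2 fun ε hε => ?_
  obtain ⟨N, hN⟩ := (hc.eventually_lt_const hε).exists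
  set C := ∑ k ∈ Finset.range N, (|a k| - b N k)
  have hsum : ∀ n, N ≤ n → |∑ k ∈ Finset.range n, a k| ≤ C + ∑ k ∈ Finset.range n, b N k := by
    intro n hn
    rw [← Finset.sum_range_add_sum_Ico _ hn, ← Finset.sum_range_add_sum_Ico (b N) hn]
    calc |∑ k ∈ Finset.range N, a k + ∑ k ∈ Finset.Ico N n, a k|
        ≤ ∑ k ∈ Finset.range N, |a k| + ∑ k ∈ Finset.Ico N n, |a k| :=
          (abs_add_le _ _).trans (add_le_add (Finset.abs_sum_le_sum_abs _ _)
            (Finset.abs_sum_le_sum_abs _ _))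
      _ ≤ ∑ k ∈ Finset.range N, |a k| + ∑ k ∈ Finset.Ico N n, b N k :=
          add_le_add le_rfl (Finset.sum_le_sum fun k hk => hab N k (Finset.mem_Ico.1 hk).1)
      _ = _ := by simp only [C, Finset.sum_sub_distrib]; ring
  have hlim : Tendsto (fun n : ℕ => C / n + (∑ k ∈ Finset.range n, b N k) / n) atTop
      (𝓝 (0 + c N)) := (tendsto_const_div_atTop_nhds_zero_nat C).add (hb N)
  filter_upwards [hlim.eventually_lt_const (by simpa using hN), eventually_ge_atTop N]
    with n hlt hn
  rw [Real.dist_eq, sub_zero, abs_div, Nat.abs_cast, ← add_div] at *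
  exact (div_le_div_of_nonneg_right (hsum n hn) n.cast_nonneg).trans_lt hlt

theorem birkhoff_varying_integrands_general
    {Ω : Type*} [MeasurableSpace Ω] (P : Measure Ω) [IsProbabilityMeasure P]
    (T : Ω → Ω) (hT : Ergodic T P)
    (g : ℕ → Ω → ℝ) (g0 : Ω → ℝ)
    (hg_meas : ∀ n, Measurable (g n)) (hg0_meas : Measurable g0)
    (hg0_int : Integrable g0 P)
    (hconv : ∀ᵐ ω ∂P, Tendsto (fun n => g n ω) atTop (𝓝 (g0 ω)))
    (hUI : UnifIntENN P (tailSup g g0)) :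
    ∀ᵐ ω ∂P, Tendsto
      (fun n : ℕ => (∑ k ∈ Finset.range n, g k (T^[k] ω)) / n)
      atTop (𝓝 (∫ ω, g0 ω ∂P)) := by
  set G := tailSup g g0
  have hG : ∀ N, Measurable (G N) := measurable_tailSup hg_meas hg0_meas
  have hGfin : ∀ N, ∫⁻ ω, G N ω ∂P ≠ ⊤ := hUI.lintegral_ne_top hG
  have hGint : ∀ N, ∫ ω, (G N ω).toReal ∂P = (∫⁻ ω, G N ω ∂P).toReal := fun N =>
    integral_toReal (hG N).aemeasurable (ae_lt_top (hG N) (hGfin N))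
  have hGlim : Tendsto (fun N => ∫ ω, (G N ω).toReal ∂P) atTop (𝓝 0) := by
    simpa [Function.comp_def, hGint] using (ENNReal.tendsto_toReal zero_ne_top).comp
      (hUI.tendsto_lintegral_zero hG (hconv.mono fun ω => tendsto_tailSup_zero))
  filter_upwards [ae_tendsto_birkhoffSum_div hT hg0_meas hg0_int,
    ae_all_iff.2 fun N => ae_tendsto_birkhoffSum_div hT (hG N).ennreal_toReal
      (integrable_toReal_of_lintegral_ne_top (hG N).aemeasurable (hGfin N)),
    ae_all_iff.2 fun N => ae_all_iff.2 fun k =>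
      (hT.toMeasurePreserving.iterate k).quasiMeasurePreserving.ae (ae_lt_top (hG N) (hGfin N))]
    with ω hg0 hGavg hGfinite
  have hdiff := tendsto_sum_div_zero_of_abs_le
    (a := fun k => g k (T^[k] ω) - g0 (T^[k] ω)) (b := fun N k => (G N (T^[k] ω)).toReal)
    (fun N k hk => abs_sub_le_toReal_tailSup hk (hGfinite N k).ne) hGavg hGlim
  have hsum := hg0.add hdiff
  rw [add_zero] at hsum
  refine hsum.congr fun n => ?_
  rw [← add_div, birkhoffSum, ← Finset.sum_add_distrib]
  simp

/-- **An ergodic theorem with varying integrands.** Let `T` be a measure-preserving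
ergodic transformation of a probability space `(Ω, F, P)` and `g_k, g : Ω → [0,∞)`
integrable nonnegative functions with `g_k → g` `P`-a.e. If the tail suprema
`G_N(ω) = sup_{k ≥ N} |g_k(ω) − g(ω)|` form a uniformly integrable sequence, then for
`P`-a.e. `ω`, `(1/n) Σ_{k<n} g_k(T^k ω) → ∫ g dP`. -/
theorem birkhoff_varying_integrands
    {Ω : Type*} [MeasurableSpace Ω] (P : Measure Ω) [IsProbabilityMeasure P]
    (T : Ω → Ω) (hT : Ergodic T P)
    (g : ℕ → Ω → ℝ) (g0 : Ω → ℝ)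
    (hg_meas : ∀ n, Measurable (g n)) (hg0_meas : Measurable g0)
    (hg_nonneg : ∀ n ω, 0 ≤ g n ω) (hg0_nonneg : ∀ ω, 0 ≤ g0 ω)
    (hg_int : ∀ n, Integrable (g n) P) (hg0_int : Integrable g0 P)
    (hconv : ∀ᵐ ω ∂P, Tendsto (fun n => g n ω) atTop (𝓝 (g0 ω)))
    (hUI : UnifIntENN P (tailSup g g0)) :
    ∀ᵐ ω ∂P, Tendsto
      (fun n : ℕ => (∑ k ∈ Finset.range n, g k (T^[k] ω)) / n)
      atTop (𝓝 (∫ ω, g0 ω ∂P)) :=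
  birkhoff_varying_integrands_general P T hT g g0 hg_meas hg0_meas hg0_int hconv hUI
end
end

section
/- Let P be a shift-invariant Borel probability measure on the two-sided binary sequence space Σ^ℤ (Σ = {0,1}). For k ≥ 1 let q_k : Σ^ℤ → [0,1] be a version of the conditional probability P(ω_0 = 0 | ω_{−k}, …, ω_{−1}), and define the conditional log-loss g_k(ω) = −log q_k(ω) if ω_0 = 0 and g_k(ω) = −log(1 − q_k(ω)) if ω_0 = 1. Then for every r > 0, P({ω : sup_{k≥1} g_k(ω) ≥ r}) ≤ 2e^{−r}; consequently, sup_{k≥1} g_k is P-integrable. -/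
open MeasureTheory ENNReal Filter Topology

noncomputable section

/-- The left shift on two-sided binary sequences. -/
def shiftZ : (ℤ → Bool) → (ℤ → Bool) := fun ω i => ω (i + 1)

/-- The σ-algebra generated by the coordinates `ω_{−k}, …, ω_{−1}`. -/
def pastAlg (k : ℕ) : MeasurableSpace (ℤ → Bool) :=
  MeasurableSpace.comap (fun ω (i : Fin k) => ω (-(i.val : ℤ) - 1)) inferInstance

/-- The σ-algebra generated by the full past `ω_{−1}, ω_{−2}, …`. -/
def fullPastAlg : MeasurableSpace (ℤ → Bool) :=
  MeasurableSpace.comap (fun ω (i : ℕ) => ω (-(i : ℤ) - 1)) inferInstance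

/-- The indicator of the event `{ω₀ = 0}` (bit `0` is encoded as `false`). -/
def ind0 : (ℤ → Bool) → ℝ := fun ω => if ω 0 = false then 1 else 0

/-- `negLog x = −log x` valued in `[0,∞]`, with `−log x = ∞` for `x ≤ 0`. -/
noncomputable def negLog (x : ℝ) : ℝ≥0∞ := if x ≤ 0 then ⊤ else ENNReal.ofReal (-Real.log x)

/-- The conditional log-loss built from a conditional probability `q` of `{ω₀ = 0}`:
`−log q(ω)` if `ω₀ = 0` and `−log(1 − q(ω))` if `ω₀ = 1`. -/
noncomputable def logLossOf (q : (ℤ → Bool) → ℝ) (ω : ℤ → Bool) : ℝ≥0∞ :=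
  if ω 0 = false then negLog (q ω) else negLog (1 - q ω)

/-- The symmetric difference `|a − b|` in `[0,∞]` (via truncated subtraction). -/
def edev (a b : ℝ≥0∞) : ℝ≥0∞ := (a - b) ⊔ (b - a)

/-! Write `Q_k = P(ω₀ = 0 ∣ ω_{−k}, …, ω_{−1})` and `t = e^{−s}`. Up to a null set, the event
`sup_k g_k > s` lies in `{ω₀ = 0, Q_k ≤ t for some k} ∪ {ω₀ = 1, 1 − Q_k ≤ t for some k}`.
Cut the first event along the first index `τ = k` with `Q_k ≤ t`: the piece `{τ = k}` is
measurable with respect to the first `k` past coordinates, so `{ω₀ = 0}` has mass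
`∫_{τ = k} Q_k ≤ t · P(τ = k)` on it, and summing over `k` gives at most `t`; the second event
is handled the same way with `1 − Q_k`. Letting `s ↑ r` gives the closed tail bound, and summing
the tails `2e^{−n}` over `n ∈ ℕ` bounds the integral. -/

section ConditionalProbability

variable {Ω : Type*} {m0 : MeasurableSpace Ω} {P : Measure Ω} {ℱ : Filtration ℕ m0}
  {A : Set Ω}

theorem measure_le_ofReal_mul_of_le_setIntegral [IsFiniteMeasure P] {E D : Set Ω} {f : Ω → ℝ}
    {t : ℝ} (hf : Integrable f P) (hD : MeasurableSet D) (hDt : D ⊆ {ω | f ω ≤ t})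
    (hE : P.real E ≤ ∫ ω in D, f ω ∂P) :
    P E ≤ ENNReal.ofReal t * P D := by
  have hle : P.real E ≤ t * P.real D :=
    calc P.real E ≤ ∫ ω in D, f ω ∂P := hE
      _ ≤ ∫ _ in D, t ∂P :=
        setIntegral_mono_on hf.integrableOn (integrableOn_const (by finiteness)) hD hDt
      _ = t * P.real D := by rw [setIntegral_const, smul_eq_mul, mul_comm]
  rw [← ofReal_measureReal, ← ofReal_measureReal (s := D),
    ← ENNReal.ofReal_mul' measureReal_nonneg]
  exact ENNReal.ofReal_le_ofReal hle

theorem measure_inter_iUnion_le_of_le_setIntegral [IsProbabilityMeasure P] {B : Set Ω}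
    {f : ℕ → Ω → ℝ} (hf : Adapted ℱ f) (hfi : ∀ k, Integrable (f k) P)
    (hBf : ∀ k D, MeasurableSet[ℱ k] D → P.real (B ∩ D) ≤ ∫ ω in D, f k ω ∂P) (t : ℝ) :
    P (B ∩ ⋃ k, {ω | f k ω ≤ t}) ≤ ENNReal.ofReal t := by
  set C : ℕ → Set Ω := fun k => {ω | f k ω ≤ t}
  have hC : ∀ k, MeasurableSet[ℱ k] (C k) := fun k => hf k measurableSet_Iic
  have hτ : ∀ k, MeasurableSet[ℱ k] (disjointed C k) := by
    intro k
    rw [disjointed_eq_inter_compl]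
    exact (hC k).inter (MeasurableSet.iInter fun j => MeasurableSet.iInter fun hj =>
      (ℱ.mono hj.le _ (hC j)).compl)
  calc P (B ∩ ⋃ k, C k)
      = P (⋃ k, B ∩ disjointed C k) := by rw [← iUnion_disjointed, Set.inter_iUnion]
    _ ≤ ∑' k, P (B ∩ disjointed C k) := measure_iUnion_le _
    _ ≤ ∑' k, ENNReal.ofReal t * P (disjointed C k) := ENNReal.tsum_le_tsum fun k =>
        measure_le_ofReal_mul_of_le_setIntegral (hfi k) (ℱ.le k _ (hτ k)) (disjointed_le C k)
          (hBf k _ (hτ k))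
    _ = ENNReal.ofReal t * P (⋃ k, disjointed C k) := by
        rw [ENNReal.tsum_mul_left,
          measure_iUnion (disjoint_disjointed C) fun k => ℱ.le k _ (hτ k)]
    _ ≤ ENNReal.ofReal t := mul_le_of_le_one_right' prob_le_one

theorem measureReal_inter_eq_setIntegral_condExp [IsFiniteMeasure P] (hA : MeasurableSet A)
    (k : ℕ) {D : Set Ω} (hD : MeasurableSet[ℱ k] D) :
    P.real (A ∩ D) = ∫ ω in D, P[A.indicator 1 | ℱ k] ω ∂P := by
  rw [setIntegral_condExp (ℱ.le k) ((integrable_const 1).indicator hA) hD,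
    setIntegral_indicator hA, Pi.one_def, setIntegral_const, smul_eq_mul, mul_one, Set.inter_comm]

theorem measureReal_compl_inter_eq_setIntegral_one_sub_condExp [IsFiniteMeasure P]
    (hA : MeasurableSet A) (k : ℕ) {D : Set Ω} (hD : MeasurableSet[ℱ k] D) :
    P.real (Aᶜ ∩ D) = ∫ ω in D, (1 - P[A.indicator 1 | ℱ k] ω) ∂P := by
  rw [integral_sub (integrable_const 1) integrable_condExp.integrableOn,
    setIntegral_const, smul_eq_mul, mul_one, ← measureReal_inter_eq_setIntegral_condExp hA k hD,
    ← measureReal_inter_add_sdiff (s := D) hA, Set.sdiff_eq, Set.inter_comm D, Set.inter_comm D]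
  ring

theorem measure_inter_iUnion_condExp_le [IsProbabilityMeasure P] (hA : MeasurableSet A) (t : ℝ) :
    P (A ∩ ⋃ k, {ω | P[A.indicator 1 | ℱ k] ω ≤ t}) ≤ ENNReal.ofReal t :=
  measure_inter_iUnion_le_of_le_setIntegral (fun _ => stronglyMeasurable_condExp.measurable)
    (fun _ => integrable_condExp)
    (fun k _ hD => (measureReal_inter_eq_setIntegral_condExp hA k hD).le) t

theorem measure_compl_inter_iUnion_one_sub_condExp_le [IsProbabilityMeasure P]
    (hA : MeasurableSet A) (t : ℝ) :
    P (Aᶜ ∩ ⋃ k, {ω | 1 - P[A.indicator 1 | ℱ k] ω ≤ t}) ≤ ENNReal.ofReal t :=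
  measure_inter_iUnion_le_of_le_setIntegral
    (fun _ => measurable_const.sub stronglyMeasurable_condExp.measurable)
    (fun _ => (integrable_const 1).sub integrable_condExp)
    (fun k _ hD => (measureReal_compl_inter_eq_setIntegral_one_sub_condExp hA k hD).le) t

end ConditionalProbability

theorem ENNReal.le_tsum_indicator_natCast_lt (a : ℝ≥0∞) :
    a ≤ ∑' n : ℕ, {x : ℝ≥0∞ | (n : ℝ≥0∞) < x}.indicator 1 a := by
  induction a with
  | top => simp
  | coe x =>
    calc (x : ℝ≥0∞) ≤ (⌈x⌉₊ : ℝ≥0∞) := by exact_mod_cast Nat.le_ceil x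
      _ = ∑ n ∈ Finset.range ⌈x⌉₊, (1 : ℝ≥0∞) := by simp
      _ = ∑ n ∈ Finset.range ⌈x⌉₊, {y : ℝ≥0∞ | (n : ℝ≥0∞) < y}.indicator 1 (x : ℝ≥0∞) :=
        Finset.sum_congr rfl fun n hn => (Set.indicator_of_mem
          (show (n : ℝ≥0∞) < x by exact_mod_cast Nat.lt_ceil.1 (Finset.mem_range.1 hn)) 1).symm
      _ ≤ _ := ENNReal.sum_le_tsum _

theorem lintegral_le_tsum_measure_natCast_lt {α : Type*} [MeasurableSpace α] {μ : Measure α}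
    {F : α → ℝ≥0∞} (hF : AEMeasurable F μ) :
    ∫⁻ ω, F ω ∂μ ≤ ∑' n : ℕ, μ {ω | (n : ℝ≥0∞) < F ω} := by
  have hmeas (n : ℕ) : NullMeasurableSet {ω | (n : ℝ≥0∞) < F ω} μ :=
    nullMeasurableSet_lt aemeasurable_const hF
  calc ∫⁻ ω, F ω ∂μ ≤ ∫⁻ ω, ∑' n : ℕ, {ω | (n : ℝ≥0∞) < F ω}.indicator 1 ω ∂μ :=
        lintegral_mono fun ω => ENNReal.le_tsum_indicator_natCast_lt (F ω)
    _ = ∑' n : ℕ, ∫⁻ ω, {ω | (n : ℝ≥0∞) < F ω}.indicator 1 ω ∂μ :=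
        lintegral_tsum fun n => aemeasurable_one.indicator₀ (hmeas n)
    _ = ∑' n : ℕ, μ {ω | (n : ℝ≥0∞) < F ω} :=
        tsum_congr fun n => lintegral_indicator_one₀ (hmeas n)

theorem ofReal_le_negLog_iff {r x : ℝ} (hr : 0 < r) :
    ENNReal.ofReal r ≤ negLog x ↔ x ≤ Real.exp (-r) := by
  unfold negLog
  split_ifs with hx
  · simpa using hx.trans (Real.exp_pos _).le
  · rw [ENNReal.ofReal_le_ofReal_iff', or_iff_left hr.not_ge, le_neg,
      Real.log_le_iff_le_exp (not_le.1 hx)]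

theorem measurable_negLog : Measurable negLog :=
  Measurable.ite measurableSet_Iic measurable_const
    (ENNReal.measurable_ofReal.comp Real.measurable_log.neg)

theorem ofReal_le_logLossOf_iff {r : ℝ} (hr : 0 < r) {q : (ℤ → Bool) → ℝ} {ω : ℤ → Bool} :
    ENNReal.ofReal r ≤ logLossOf q ω ↔
      if ω 0 = false then q ω ≤ Real.exp (-r) else 1 - q ω ≤ Real.exp (-r) := by
  unfold logLossOf
  split_ifs <;> exact ofReal_le_negLog_iff hr

theorem measurableSet_zero_eq_false : MeasurableSet {ω : ℤ → Bool | ω 0 = false} :=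
  measurableSet_eq_fun (measurable_pi_apply 0) measurable_const

theorem Measurable.logLossOf {q : (ℤ → Bool) → ℝ} (hq : Measurable q) :
    Measurable (logLossOf q) :=
  Measurable.ite measurableSet_zero_eq_false
    (measurable_negLog.comp hq) (measurable_negLog.comp (measurable_const.sub hq))

theorem ind0_eq_indicator : ind0 = {ω : ℤ → Bool | ω 0 = false}.indicator 1 := by
  ext ω
  by_cases h : ω 0 = false <;> simp [ind0, h]

theorem pastAlg_le (k : ℕ) : pastAlg k ≤ MeasurableSpace.pi :=
  Measurable.comap_le (measurable_pi_lambda _ fun _ => measurable_pi_apply _)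

theorem pastAlg_mono : Monotone pastAlg := by
  intro j k hjk
  have hrestrict : (fun (ω : ℤ → Bool) (i : Fin j) => ω (-(i.val : ℤ) - 1))
      = (fun (v : Fin k → Bool) (i : Fin j) => v (Fin.castLE hjk i))
        ∘ (fun (ω : ℤ → Bool) (i : Fin k) => ω (-(i.val : ℤ) - 1)) := rfl
  rw [pastAlg, pastAlg, hrestrict, ← MeasurableSpace.comap_comp]
  exact MeasurableSpace.comap_mono
    (Measurable.comap_le (measurable_pi_lambda _ fun _ => measurable_pi_apply _))

def pastFiltration : Filtration ℕ (MeasurableSpace.pi : MeasurableSpace (ℤ → Bool)) :=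
  ⟨pastAlg, pastAlg_mono, pastAlg_le⟩

def supLogLoss (q : ℕ → (ℤ → Bool) → ℝ) (ω : ℤ → Bool) : ℝ≥0∞ :=
  ⨆ k : ℕ, ⨆ _ : 1 ≤ k, logLossOf (q k) ω

theorem supLogLoss_ae_eq {P : Measure (ℤ → Bool)} {q q' : ℕ → (ℤ → Bool) → ℝ}
    (h : ∀ k, 1 ≤ k → q k =ᵐ[P] q' k) : supLogLoss q =ᵐ[P] supLogLoss q' := by
  filter_upwards [ae_all_iff.2 fun k => h (k + 1) k.succ_pos] with ω hω
  refine iSup_congr fun k => iSup_congr fun hk => ?_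
  obtain ⟨j, rfl⟩ := Nat.exists_eq_add_of_le' hk
  rw [logLossOf, logLossOf, hω j]

theorem Measurable.supLogLoss {q : ℕ → (ℤ → Bool) → ℝ} (hq : ∀ k, Measurable (q k)) :
    Measurable (supLogLoss q) :=
  Measurable.iSup fun k => Measurable.iSup fun _ => (hq k).logLossOf

section CanonicalVersion

variable (P : Measure (ℤ → Bool)) [IsProbabilityMeasure P]

theorem measure_ofReal_lt_supLogLoss_condExp_le {s : ℝ} (hs : 0 < s) :
    P {ω | ENNReal.ofReal s < supLogLoss (fun k => P[ind0 | pastAlg k]) ω}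
      ≤ ENNReal.ofReal (2 * Real.exp (-s)) := by
  set A : Set (ℤ → Bool) := {ω | ω 0 = false}
  have hA : MeasurableSet A := measurableSet_zero_eq_false
  set Q : ℕ → (ℤ → Bool) → ℝ := fun k => P[A.indicator 1 | pastFiltration k]
  have hcover : {ω | ENNReal.ofReal s < supLogLoss (fun k => P[ind0 | pastAlg k]) ω}
      ⊆ (A ∩ ⋃ k, {ω | Q k ω ≤ Real.exp (-s)}) ∪
        (Aᶜ ∩ ⋃ k, {ω | 1 - Q k ω ≤ Real.exp (-s)}) := by
    intro ω hω
    obtain ⟨k, hk⟩ := lt_iSup_iff.1 (show ENNReal.ofReal s < supLogLoss _ ω from hω)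
    obtain ⟨-, hk⟩ := lt_iSup_iff.1 hk
    rw [ind0_eq_indicator] at hk
    have hlow := (ofReal_le_logLossOf_iff hs).1 hk.le
    split_ifs at hlow with h0
    · exact Or.inl ⟨h0, Set.mem_iUnion.2 ⟨k, hlow⟩⟩
    · exact Or.inr ⟨h0, Set.mem_iUnion.2 ⟨k, hlow⟩⟩
  calc _ ≤ _ := measure_mono hcover
    _ ≤ _ := measure_union_le _ _
    _ ≤ ENNReal.ofReal (Real.exp (-s)) + ENNReal.ofReal (Real.exp (-s)) :=
        add_le_add (measure_inter_iUnion_condExp_le hA _)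
          (measure_compl_inter_iUnion_one_sub_condExp_le hA _)
    _ = ENNReal.ofReal (2 * Real.exp (-s)) := by
        rw [← ENNReal.ofReal_add (by positivity) (by positivity), two_mul]

theorem measure_ofReal_le_supLogLoss_condExp_le {r : ℝ} (hr : 0 < r) :
    P {ω | ENNReal.ofReal r ≤ supLogLoss (fun k => P[ind0 | pastAlg k]) ω}
      ≤ ENNReal.ofReal (2 * Real.exp (-r)) := by
  have hbound : Continuous fun s : ℝ => ENNReal.ofReal (2 * Real.exp (-s)) :=
    ENNReal.continuous_ofReal.comp (by fun_prop)
  refine ge_of_tendsto (x := 𝓝[<] r) ((hbound.tendsto r).mono_left nhdsWithin_le_nhds) ?_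
  filter_upwards [Ioo_mem_nhdsLT hr] with s hs
  refine (measure_mono fun ω hω => ?_).trans (measure_ofReal_lt_supLogLoss_condExp_le P hs.1)
  exact ((ENNReal.ofReal_lt_ofReal_iff hr).2 hs.2).trans_le hω

theorem lintegral_supLogLoss_condExp_ne_top :
    ∫⁻ ω, supLogLoss (fun k => P[ind0 | pastAlg k]) ω ∂P ≠ ⊤ := by
  have htail (n : ℕ) : P {ω | (n : ℝ≥0∞) < supLogLoss (fun k => P[ind0 | pastAlg k]) ω}
      ≤ ENNReal.ofReal (2 * Real.exp (-n)) := by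
    rcases n.eq_zero_or_pos with rfl | hn
    · simpa using prob_le_one.trans (by norm_num : (1 : ℝ≥0∞) ≤ 2)
    · simpa using measure_ofReal_lt_supLogLoss_condExp_le P (Nat.cast_pos.2 hn)
  refine ne_top_of_le_ne_top ?_ ((lintegral_le_tsum_measure_natCast_lt
    (Measurable.supLogLoss fun k => stronglyMeasurable_condExp.measurable.mono
      (pastAlg_le k) le_rfl).aemeasurable).trans (ENNReal.tsum_le_tsum htail))
  rw [← ENNReal.ofReal_tsum_of_nonneg (fun n => by positivity)
    (Real.summable_exp_neg_nat.mul_left 2)]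
  exact ENNReal.ofReal_ne_top

end CanonicalVersion

theorem logloss_sup_tail_bound_general
    (P : Measure (ℤ → Bool)) [IsProbabilityMeasure P]
    (q : ℕ → (ℤ → Bool) → ℝ)
    (hq : ∀ k, 1 ≤ k → q k =ᵐ[P] P[ind0 | pastAlg k]) :
    (∀ r : ℝ, 0 < r →
      P {ω | ENNReal.ofReal r ≤ ⨆ k : ℕ, ⨆ _ : 1 ≤ k, logLossOf (q k) ω}
        ≤ ENNReal.ofReal (2 * Real.exp (-r)))
    ∧ (∫⁻ ω, (⨆ k : ℕ, ⨆ _ : 1 ≤ k, logLossOf (q k) ω) ∂P) ≠ ⊤ := by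
  have hsup : supLogLoss q =ᵐ[P] supLogLoss (fun k => P[ind0 | pastAlg k]) :=
    supLogLoss_ae_eq hq
  refine ⟨fun r hr => ?_, ?_⟩
  · calc P {ω | ENNReal.ofReal r ≤ supLogLoss q ω}
        = P {ω | ENNReal.ofReal r ≤ supLogLoss (fun k => P[ind0 | pastAlg k]) ω} :=
          measure_congr (hsup.fun_comp (ENNReal.ofReal r ≤ ·))
      _ ≤ ENNReal.ofReal (2 * Real.exp (-r)) := measure_ofReal_le_supLogLoss_condExp_le P hr
  · exact (lintegral_congr_ae hsup).trans_ne (lintegral_supLogLoss_condExp_ne_top P)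

/-- **Exponential tail bound for conditional log-losses.** Let `P` be a shift-invariant
probability measure on `{0,1}^ℤ` and, for `k ≥ 1`, let `q_k` be a version of the
conditional probability `P(ω₀ = 0 | ω_{−k}, …, ω_{−1})`, with conditional log-loss
`g_k(ω) = −log q_k(ω)` if `ω₀ = 0` and `−log(1 − q_k(ω))` if `ω₀ = 1`. Then
`P(sup_{k≥1} g_k ≥ r) ≤ 2·e^{−r}` for every `r > 0`; consequently `sup_{k≥1} g_k` is
`P`-integrable. -/
theorem logloss_sup_tail_bound
    (P : Measure (ℤ → Bool)) [IsProbabilityMeasure P]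
    (hstat : P.map shiftZ = P)
    (q : ℕ → (ℤ → Bool) → ℝ)
    (hq_range : ∀ k ω, q k ω ∈ Set.Icc (0:ℝ) 1)
    (hq : ∀ k, 1 ≤ k → q k =ᵐ[P] P[ind0 | pastAlg k]) :
    (∀ r : ℝ, 0 < r →
      P {ω | ENNReal.ofReal r ≤ ⨆ k : ℕ, ⨆ _ : 1 ≤ k, logLossOf (q k) ω}
        ≤ ENNReal.ofReal (2 * Real.exp (-r)))
    ∧ (∫⁻ ω, (⨆ k : ℕ, ⨆ _ : 1 ≤ k, logLossOf (q k) ω) ∂P) ≠ ⊤ :=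
  logloss_sup_tail_bound_general P q hq
end
end

section
/- For any regular binary game and any stationary probability measure P on Σ^∞, the generalized entropy is monotone: H_{m+n} ≥ H_m for all natural numbers m, n ≥ 1, and moreover lim_{n→∞} H_{1|n} ≤ H_1, so the generalized entropy H = lim_{n→∞} H_n/n satisfies H ≤ H_1. -/
open MeasureTheory ENNReal Filter Topology

noncomputable section

/-! Expressing the expected loss of a strategy on `n`-bit strings as the integral of its
cumulative loss along the first `n` symbols of the sequence, `H_n` is monotone because that
cumulative loss only grows with `n`. For `H ≤ H_1` and `lim H_{1|n} ≤ H_1`, play a constant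
prediction `γ`: by stationarity every symbol `ω i` is distributed like `ω 0`, so
`H_n ≤ n · ∫ λ(ω 0, γ) dP` and `H_{1|n} ≤ ∫ λ(ω 0, γ) dP`, while `H_1` is exactly the infimum
over `γ` of `∫ λ(ω 0, γ) dP`. -/

lemma measurable_shiftN : Measurable shiftN :=
  measurable_pi_lambda _ fun _ => measurable_pi_apply _

lemma shiftN_iterate_apply (m k : ℕ) (ω : ℕ → Bool) : shiftN^[m] ω k = ω (k + m) := by
  induction m generalizing ω with
  | zero => rfl
  | succ m ih => rw [Function.iterate_succ_apply, ih]; rfl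

lemma measurePreserving_shiftN_iterate {P : Measure (ℕ → Bool)} (hstat : P.map shiftN = P)
    (m : ℕ) : MeasurePreserving shiftN^[m] P P :=
  MeasurePreserving.iterate ⟨measurable_shiftN, hstat⟩ m

lemma cyl_eq_preimage {n : ℕ} (w : Fin n → Bool) :
    cyl w = (fun (ω : ℕ → Bool) (i : Fin n) => ω i) ⁻¹' {w} := by
  ext ω
  simp [cyl, funext_iff]

lemma sum_measure_cyl_mul_eq_lintegral (P : Measure (ℕ → Bool)) {n : ℕ}
    (g : (Fin n → Bool) → ℝ≥0∞) :
    ∑ w, P (cyl w) * g w = ∫⁻ ω, g (fun i => ω i) ∂P := by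
  have hr : Measurable fun (ω : ℕ → Bool) (i : Fin n) => ω i :=
    measurable_pi_lambda _ fun _ => measurable_pi_apply _
  rw [← lintegral_map (measurable_of_finite g) hr, lintegral_fintype]
  refine Finset.sum_congr rfl fun w _ => ?_
  rw [Measure.map_apply hr (measurableSet_singleton w), cyl_eq_preimage, mul_comm]

lemma lintegral_loss_apply_eq_apply_zero (G : RegularGame) {P : Measure (ℕ → Bool)}
    (hstat : P.map shiftN = P) (i : ℕ) (γ : ℝ) :
    ∫⁻ ω, G.loss (ω i) γ ∂P = ∫⁻ ω, G.loss (ω 0) γ ∂P := by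
  have hf : Measurable fun ω : ℕ → Bool => G.loss (ω 0) γ :=
    (measurable_of_finite fun b => G.loss b γ).comp (measurable_pi_apply 0)
  simpa [shiftN_iterate_apply] using (measurePreserving_shiftN_iterate hstat i).lintegral_comp hf

lemma strategyLoss_prefix_mono (G : RegularGame) (S : Strategy) (ω : ℕ → Bool) :
    Monotone fun n => strategyLoss G (fun i : Fin n => ω i) S := by
  intro m n hmn
  simp only [strategyLoss]
  rw [Fin.sum_univ_eq_sum_range (fun i => G.loss (ω i) (S i fun j : Fin i => ω j)),
    Fin.sum_univ_eq_sum_range (fun i => G.loss (ω i) (S i fun j : Fin i => ω j))]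
  exact Finset.sum_le_sum_of_subset (Finset.range_mono hmn)

lemma Hn_eq_iInf_lintegral (G : RegularGame) (P : Measure (ℕ → Bool)) (n : ℕ) :
    Hn G P n = ⨅ S, ∫⁻ ω, strategyLoss G (fun i : Fin n => ω i) S ∂P := by
  simp only [Hn, sum_measure_cyl_mul_eq_lintegral]

lemma Hn_mono (G : RegularGame) (P : Measure (ℕ → Bool)) : Monotone (Hn G P) := by
  intro m n hmn
  simp only [Hn_eq_iInf_lintegral]
  exact iInf_mono fun S => lintegral_mono fun ω => strategyLoss_prefix_mono G S ω hmn

lemma Hn_one_eq_iInf (G : RegularGame) (P : Measure (ℕ → Bool)) :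
    Hn G P 1 = ⨅ γ : Set.Icc (0:ℝ) 1, ∫⁻ ω, G.loss (ω 0) γ ∂P := by
  have hfirst : Function.Surjective fun S : Strategy => S 0 Fin.elim0 :=
    fun γ => ⟨fun _ _ => γ, rfl⟩
  rw [Hn_eq_iInf_lintegral, ← hfirst.iInf_comp]
  congr! with S ω
  simp [strategyLoss, Subsingleton.elim _ (Fin.elim0 : Fin 0 → Bool)]

lemma Hn_le_mul_lintegral_loss (G : RegularGame) {P : Measure (ℕ → Bool)}
    (hstat : P.map shiftN = P) (n : ℕ) (γ : Set.Icc (0:ℝ) 1) :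
    Hn G P n ≤ n * ∫⁻ ω, G.loss (ω 0) γ ∂P := by
  rw [Hn_eq_iInf_lintegral]
  calc ⨅ S, ∫⁻ ω, strategyLoss G (fun i : Fin n => ω i) S ∂P
      ≤ ∫⁻ ω, ∑ i : Fin n, G.loss (ω i) γ ∂P := iInf_le_of_le (fun _ _ => γ) le_rfl
    _ = ∑ i : Fin n, ∫⁻ ω, G.loss (ω i) γ ∂P :=
        lintegral_finsetSum _ fun i _ =>
          (measurable_of_finite fun b => G.loss b γ).comp (measurable_pi_apply _)
    _ = n * ∫⁻ ω, G.loss (ω 0) γ ∂P := by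
        simp [lintegral_loss_apply_eq_apply_zero G hstat]

lemma Hcond_one_le_lintegral_loss (G : RegularGame) {P : Measure (ℕ → Bool)}
    (hstat : P.map shiftN = P) (n : ℕ) (γ : Set.Icc (0:ℝ) 1) :
    Hcond G P 1 n ≤ ∫⁻ ω, G.loss (ω 0) γ ∂P := by
  calc Hcond G P 1 n
      ≤ ∑ w : Fin n → Bool, ∑ x : Fin 1 → Bool,
          P (cyl (Fin.append w x)) * G.loss (Fin.append w x (Fin.natAdd n 0)) γ := by
        refine iInf_le_of_le (fun _ _ => γ) (le_of_eq ?_)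
        simp only [Fin.sum_univ_one, Fin.append_right]
    _ = ∑ u : Fin (n + 1) → Bool, P (cyl u) * G.loss (u (Fin.natAdd n 0)) γ := by
        rw [← Fintype.sum_prod_type']
        exact (Fin.appendEquiv n 1).sum_comp fun u =>
          P (cyl u) * G.loss (u (Fin.natAdd n 0)) γ
    _ = ∫⁻ ω, G.loss (ω 0) γ ∂P := by
        rw [sum_measure_cyl_mul_eq_lintegral P fun u => G.loss (u (Fin.natAdd n 0)) γ]
        exact lintegral_loss_apply_eq_apply_zero G hstat (n + 0) γ

theorem generalized_entropy_le_H1_general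
    (G : RegularGame) (P : Measure (ℕ → Bool))
    (hstat : P.map shiftN = P) :
    (∀ m n : ℕ, 1 ≤ m → 1 ≤ n → Hn G P m ≤ Hn G P (m + n))
    ∧ (∀ L : ℝ≥0∞, Tendsto (fun n : ℕ => Hcond G P 1 n) atTop (𝓝 L) → L ≤ Hn G P 1)
    ∧ (∀ H : ℝ≥0∞, Tendsto (fun n : ℕ => Hn G P n / (n : ℝ≥0∞)) atTop (𝓝 H) →
        H ≤ Hn G P 1) := by
  refine ⟨fun m n _ _ => Hn_mono G P (Nat.le_add_right m n), fun L hL => ?_, fun H hH => ?_⟩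
  all_goals rw [Hn_one_eq_iInf]; refine le_iInf fun γ => ?_
  · exact le_of_tendsto' hL fun n => Hcond_one_le_lintegral_loss G hstat n γ
  · refine le_of_tendsto hH (eventually_atTop.2 ⟨1, fun n hn => ?_⟩)
    have hn0 : (n : ℝ≥0∞) ≠ 0 := Nat.cast_ne_zero.2 (Nat.one_le_iff_ne_zero.1 hn)
    rw [ENNReal.div_le_iff_le_mul (.inl hn0) (.inl (ENNReal.natCast_ne_top n)), mul_comm]
    exact Hn_le_mul_lintegral_loss G hstat n γ

/-- **Monotonicity of generalized entropy and the bound `H ≤ H_1`.** For any regular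
binary game and stationary probability measure `P`: `H_{m+n} ≥ H_m` for `m, n ≥ 1`;
the limit of the one-step conditional entropies `H_{1|n}` is at most `H_1`; and the
generalized entropy `H = lim_{n→∞} H_n / n` satisfies `H ≤ H_1`. -/
theorem generalized_entropy_le_H1
    (G : RegularGame) (P : Measure (ℕ → Bool)) [IsProbabilityMeasure P]
    (hstat : P.map shiftN = P) :
    (∀ m n : ℕ, 1 ≤ m → 1 ≤ n → Hn G P m ≤ Hn G P (m + n))
    ∧ (∀ L : ℝ≥0∞, Tendsto (fun n : ℕ => Hcond G P 1 n) atTop (𝓝 L) → L ≤ Hn G P 1)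
    ∧ (∀ H : ℝ≥0∞, Tendsto (fun n : ℕ => Hn G P n / (n : ℝ≥0∞)) atTop (𝓝 H) →
        H ≤ Hn G P 1) :=
  generalized_entropy_le_H1_general G P hstat
end
end
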